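/- arXiv:2605.21214 — 7 statements merged into one kernel-verified Lean document; each statement's English description precedes it below -/
import Mathlib

section
/- Let A be a finite nonempty set, Q¹, Q² : A → ℝ, and α > 0. Let π¹ and π² be the Boltzmann policies at temperature α induced by Q¹ and Q². Then D_KL(π¹‖π²) ≤ 2 · max_{a∈A} |Q¹(a) − Q²(a)| / α. -/
open Finset Real

/-- The Boltzmann policy at temperature `α` induced by `Q : A → ℝ`:
`π(a) = exp(Q(a)/α) / ∑_b exp(Q(b)/α)`. -/
noncomputable def boltzmann {A : Type*} [Fintype A] (Q : A → ℝ) (α : ℝ) (a : A) : ℝ :=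
  Real.exp (Q a / α) / ∑ b, Real.exp (Q b / α)

/-- KL divergence between two probability distributions on a finite set:
`D_KL(p‖q) = ∑_a p(a)·log(p(a)/q(a))`. -/
noncomputable def klDiv {A : Type*} [Fintype A] (p q : A → ℝ) : ℝ :=
  ∑ a, p a * Real.log (p a / q a)

/-!
The log-likelihood ratio of two Boltzmann policies is
`log (π¹ a / π² a) = (Q¹ a - Q² a) / α + (log Z² - log Z¹)`, where `Z` is the partition function.
Both summands are at most `M / α` with `M = maxₐ |Q¹ a - Q² a|`, the second because log-sum-exp
is monotone and commutes with adding constants. Averaging the bound `2M / α` over `π¹` bounds the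
KL divergence.
-/

theorem klDiv_le_of_forall_log_div_le {A : Type*} [Fintype A] {p q : A → ℝ} {c : ℝ}
    (hp : ∀ a, 0 ≤ p a) (hp_sum : ∑ a, p a = 1) (h : ∀ a, Real.log (p a / q a) ≤ c) :
    klDiv p q ≤ c :=
  calc klDiv p q ≤ ∑ a, p a * c := sum_le_sum fun a _ => mul_le_mul_of_nonneg_left (h a) (hp a)
    _ = c := by rw [← sum_mul, hp_sum, one_mul]

theorem sum_exp_pos {A : Type*} [Fintype A] [Nonempty A] (f : A → ℝ) :
    0 < ∑ a, Real.exp (f a) :=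
  sum_pos (fun _ _ => exp_pos _) univ_nonempty

theorem log_sum_exp_le_add {A : Type*} [Fintype A] [Nonempty A] {f g : A → ℝ} {c : ℝ}
    (h : ∀ a, g a ≤ f a + c) :
    Real.log (∑ a, Real.exp (g a)) ≤ Real.log (∑ a, Real.exp (f a)) + c := by
  have hle : ∑ a, Real.exp (g a) ≤ (∑ a, Real.exp (f a)) * Real.exp c := by
    rw [sum_mul]
    exact sum_le_sum fun a _ => by rw [← exp_add]; exact exp_le_exp.2 (h a)
  calc Real.log (∑ a, Real.exp (g a)) ≤ Real.log ((∑ a, Real.exp (f a)) * Real.exp c) :=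
        log_le_log (sum_exp_pos g) hle
    _ = Real.log (∑ a, Real.exp (f a)) + c := by
        rw [log_mul (sum_exp_pos f).ne' (exp_ne_zero c), log_exp]

section Boltzmann

variable {A : Type*} [Fintype A] [Nonempty A]

theorem boltzmann_pos (Q : A → ℝ) (α : ℝ) (a : A) : 0 < boltzmann Q α a :=
  div_pos (exp_pos _) (sum_exp_pos fun b => Q b / α)

theorem sum_boltzmann (Q : A → ℝ) (α : ℝ) : ∑ a, boltzmann Q α a = 1 := by
  simp only [boltzmann]
  rw [← sum_div, div_self (sum_exp_pos fun b => Q b / α).ne']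

theorem log_boltzmann (Q : A → ℝ) (α : ℝ) (a : A) :
    Real.log (boltzmann Q α a) = Q a / α - Real.log (∑ b, Real.exp (Q b / α)) := by
  rw [boltzmann, log_div (exp_ne_zero _) (sum_exp_pos fun b => Q b / α).ne', log_exp]

theorem log_boltzmann_div_boltzmann_le {Q1 Q2 : A → ℝ} {α M : ℝ} (hα : 0 < α)
    (hM : ∀ a, |Q1 a - Q2 a| ≤ M) (a : A) :
    Real.log (boltzmann Q1 α a / boltzmann Q2 α a) ≤ 2 * M / α := by
  have hQ : Q1 a / α ≤ Q2 a / α + M / α := by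
    rw [← add_div]
    gcongr
    linarith [(abs_le.1 (hM a)).2]
  have hZ : Real.log (∑ b, Real.exp (Q2 b / α)) ≤ Real.log (∑ b, Real.exp (Q1 b / α)) + M / α :=
    log_sum_exp_le_add fun b => by
      rw [← add_div]
      gcongr
      linarith [(abs_le.1 (hM b)).1]
  rw [log_div (boltzmann_pos Q1 α a).ne' (boltzmann_pos Q2 α a).ne', log_boltzmann,
    log_boltzmann]
  linarith [show 2 * M / α = M / α + M / α by ring]

end Boltzmann

/-- KL bound for Boltzmann policies at a shared temperature `α > 0`:
`D_KL(π¹‖π²) ≤ 2·max_a |Q¹(a) − Q²(a)| / α`. -/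
theorem boltzmann_kl_le {A : Type*} [Fintype A] [Nonempty A]
    (Q1 Q2 : A → ℝ) (α : ℝ) (hα : 0 < α) :
    klDiv (boltzmann Q1 α) (boltzmann Q2 α) ≤
      2 * (Finset.univ.sup' Finset.univ_nonempty fun a => |Q1 a - Q2 a|) / α :=
  klDiv_le_of_forall_log_div_le (fun a => (boltzmann_pos Q1 α a).le) (sum_boltzmann Q1 α)
    (log_boltzmann_div_boltzmann_le hα fun a => le_sup' (fun a => |Q1 a - Q2 a|) (mem_univ a))
end

section
/- (Pairwise KL control via disagreement-scaled temperature.) Let A be a finite nonempty set, Q¹, Q² : A → ℝ, κ > 0, and α_min > 0. Define the shared temperature α = max{α_min, (max_{a∈A} |Q¹(a) − Q²(a)|)/κ}, and let π¹ and π² be the Boltzmann policies at temperature α induced by Q¹ and Q². Then D_KL(π¹‖π²) ≤ 2κ. -/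
open Finset Real

/-- Pairwise KL control via disagreement-scaled temperature: with the shared
temperature `α = max{α_min, (max_a |Q¹(a) − Q²(a)|)/κ}`, the induced Boltzmann
policies satisfy `D_KL(π¹‖π²) ≤ 2κ`. -/
theorem pairwise_kl_control {A : Type*} [Fintype A] [Nonempty A]
    (Q1 Q2 : A → ℝ) (κ αmin : ℝ) (hκ : 0 < κ) (hαmin : 0 < αmin)
    (α : ℝ)
    (hα : α = max αmin ((Finset.univ.sup' Finset.univ_nonempty fun a => |Q1 a - Q2 a|) / κ)) :
    klDiv (boltzmann Q1 α) (boltzmann Q2 α) ≤ 2 * κ := by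
  have hαpos : 0 < α := lt_of_lt_of_le hαmin (hα ▸ le_max_left _ _)
  have hMle : (Finset.univ.sup' Finset.univ_nonempty fun a => |Q1 a - Q2 a|) ≤ κ * α := by
    have h : (Finset.univ.sup' Finset.univ_nonempty fun a => |Q1 a - Q2 a|) / κ ≤ α :=
      hα ▸ le_max_right _ _
    rw [div_le_iff₀ hκ] at h
    linarith [h]
  have hdiff : ∀ a, |Q1 a - Q2 a| ≤ κ * α := fun a =>
    le_trans (Finset.le_sup' (fun a => |Q1 a - Q2 a|) (Finset.mem_univ a)) hMle
  set S1 := ∑ b, Real.exp (Q1 b / α) with hS1def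
  set S2 := ∑ b, Real.exp (Q2 b / α) with hS2def
  have hS1 : 0 < S1 := Finset.sum_pos (fun b _ => Real.exp_pos _) Finset.univ_nonempty
  have hS2 : 0 < S2 := Finset.sum_pos (fun b _ => Real.exp_pos _) Finset.univ_nonempty
  have hS2le : S2 ≤ Real.exp κ * S1 := by
    rw [hS1def, hS2def, Finset.mul_sum]
    apply Finset.sum_le_sum
    intro b _
    rw [← Real.exp_add, Real.exp_le_exp]
    have h1 : Q2 b - Q1 b ≤ κ * α := by
      have := (abs_le.mp (hdiff b)).1; linarith
    have h2 : Q2 b / α - Q1 b / α ≤ κ := by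
      rw [div_sub_div_same, div_le_iff₀ hαpos]; linarith
    linarith
  have hlog : Real.log S2 - Real.log S1 ≤ κ := by
    have h := Real.log_le_log hS2 hS2le
    rw [Real.log_mul (Real.exp_ne_zero _) hS1.ne', Real.log_exp] at h
    linarith
  have hterm : ∀ a, Real.log (boltzmann Q1 α a / boltzmann Q2 α a) ≤ 2 * κ := by
    intro a
    have hp : boltzmann Q1 α a = Real.exp (Q1 a / α) / S1 := rfl
    have hq : boltzmann Q2 α a = Real.exp (Q2 a / α) / S2 := rfl
    rw [hp, hq, Real.log_div (by positivity) (by positivity),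
      Real.log_div (Real.exp_ne_zero _) hS1.ne', Real.log_div (Real.exp_ne_zero _) hS2.ne',
      Real.log_exp, Real.log_exp]
    have h1 : Q1 a - Q2 a ≤ κ * α := (abs_le.mp (hdiff a)).2
    have h2 : Q1 a / α - Q2 a / α ≤ κ := by
      rw [div_sub_div_same, div_le_iff₀ hαpos]; linarith
    linarith
  have hsum : ∑ a, boltzmann Q1 α a = 1 := by
    simp only [boltzmann, ← Finset.sum_div, ← hS1def]
    exact div_self hS1.ne'
  calc klDiv (boltzmann Q1 α) (boltzmann Q2 α)
      ≤ ∑ a, boltzmann Q1 α a * (2 * κ) := by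
        apply Finset.sum_le_sum
        intro a _
        exact mul_le_mul_of_nonneg_left (hterm a) (by unfold boltzmann; positivity)
    _ = 2 * κ := by rw [← Finset.sum_mul, hsum, one_mul]
end

section
/- (Symmetric KL control via disagreement-scaled temperature.) Let A be a finite nonempty set, Q¹, Q² : A → ℝ, κ > 0, and α_min > 0. Define the shared temperature α = max{α_min, (max_{a∈A} |Q¹(a) − Q²(a)|)/κ}, and let π¹ and π² be the Boltzmann policies at temperature α induced by Q¹ and Q². Then the symmetric KL divergence satisfies (1/2) · [D_KL(π¹‖π²) + D_KL(π²‖π¹)] ≤ 2κ. -/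
open Finset Real

/-- Symmetric KL control via disagreement-scaled temperature: with the shared
temperature `α = max{α_min, (max_a |Q¹(a) − Q²(a)|)/κ}`, the induced Boltzmann
policies satisfy `(1/2)·[D_KL(π¹‖π²) + D_KL(π²‖π¹)] ≤ 2κ`. -/
theorem symmetric_kl_control {A : Type*} [Fintype A] [Nonempty A]
    (Q1 Q2 : A → ℝ) (κ αmin : ℝ) (hκ : 0 < κ) (hαmin : 0 < αmin)
    (α : ℝ)
    (hα : α = max αmin ((Finset.univ.sup' Finset.univ_nonempty fun a => |Q1 a - Q2 a|) / κ)) :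
    (1 / 2) * (klDiv (boltzmann Q1 α) (boltzmann Q2 α) +
        klDiv (boltzmann Q2 α) (boltzmann Q1 α)) ≤ 2 * κ := by
  set M := (Finset.univ.sup' Finset.univ_nonempty fun a => |Q1 a - Q2 a|) with hMdef
  have hα0 : 0 < α := lt_of_lt_of_le hαmin (hα ▸ le_max_left _ _)
  have hMκα : M ≤ α * κ := (div_le_iff₀ hκ).mp (hα ▸ le_max_right _ _)
  set Z1 : ℝ := ∑ b, Real.exp (Q1 b / α) with hZ1
  set Z2 : ℝ := ∑ b, Real.exp (Q2 b / α) with hZ2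
  have hZ1pos : 0 < Z1 := Finset.sum_pos (fun b _ => Real.exp_pos _) Finset.univ_nonempty
  have hZ2pos : 0 < Z2 := Finset.sum_pos (fun b _ => Real.exp_pos _) Finset.univ_nonempty
  set p := boltzmann Q1 α with hp
  set q := boltzmann Q2 α with hq
  have hppos : ∀ a, 0 < p a := fun a => div_pos (Real.exp_pos _) hZ1pos
  have hqpos : ∀ a, 0 < q a := fun a => div_pos (Real.exp_pos _) hZ2pos
  have hpsum : ∑ a, p a = 1 := by
    rw [hp]; unfold boltzmann
    rw [← Finset.sum_div, div_self hZ1pos.ne']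
  have hqsum : ∑ a, q a = 1 := by
    rw [hq]; unfold boltzmann
    rw [← Finset.sum_div, div_self hZ2pos.ne']
  set c : ℝ := Real.log Z1 - Real.log Z2 with hc
  set d : A → ℝ := fun a => (Q1 a - Q2 a) / α with hd
  have hlog : ∀ a, Real.log (p a / q a) = d a - c := by
    intro a
    rw [Real.log_div (hppos a).ne' (hqpos a).ne']
    rw [hp, hq]; unfold boltzmann
    rw [Real.log_div (Real.exp_pos _).ne' hZ1pos.ne',
        Real.log_div (Real.exp_pos _).ne' hZ2pos.ne',
        Real.log_exp, Real.log_exp]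
    simp only [hd, hc, sub_div]
    ring
  have hdbound : ∀ a, |d a| ≤ κ := by
    intro a
    have h1 : |Q1 a - Q2 a| ≤ M := Finset.le_sup' (fun a => |Q1 a - Q2 a|) (Finset.mem_univ a)
    rw [hd, abs_div, abs_of_pos hα0, div_le_iff₀ hα0]
    calc |Q1 a - Q2 a| ≤ M := h1
      _ ≤ α * κ := hMκα
      _ = κ * α := mul_comm _ _
  have hsym : klDiv p q + klDiv q p = ∑ a, (p a - q a) * d a := by
    unfold klDiv
    rw [← Finset.sum_add_distrib]
    have key : ∀ a ∈ Finset.univ, p a * Real.log (p a / q a) + q a * Real.log (q a / p a)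
        = (p a - q a) * d a - (p a - q a) * c := by
      intro a _
      have h2 : Real.log (q a / p a) = -(d a - c) := by
        rw [Real.log_div (hqpos a).ne' (hppos a).ne', ← hlog a,
            Real.log_div (hppos a).ne' (hqpos a).ne']
        ring
      rw [hlog a, h2]; ring
    rw [Finset.sum_congr rfl key, Finset.sum_sub_distrib, ← Finset.sum_mul,
        Finset.sum_sub_distrib, hpsum, hqsum]
    ring
  have hbound : ∑ a, (p a - q a) * d a ≤ 2 * κ := by
    calc ∑ a, (p a - q a) * d a ≤ ∑ a, |p a - q a| * κ := by
          apply Finset.sum_le_sum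
          intro a _
          calc (p a - q a) * d a ≤ |(p a - q a) * d a| := le_abs_self _
            _ = |p a - q a| * |d a| := abs_mul _ _
            _ ≤ |p a - q a| * κ := by
                exact mul_le_mul_of_nonneg_left (hdbound a) (abs_nonneg _)
      _ ≤ ∑ a, (p a + q a) * κ := by
          apply Finset.sum_le_sum
          intro a _
          apply mul_le_mul_of_nonneg_right _ hκ.le
          rw [abs_sub_le_iff]
          constructor <;> nlinarith [hppos a, hqpos a]
      _ = 2 * κ := by
          rw [← Finset.sum_mul, Finset.sum_add_distrib, hpsum, hqsum]; ring
  rw [hsym]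
  nlinarith [hbound]
end

section
/- For every Q : S × A → ℝ, every temperature function α : S → ℝ with α(s) > 0 for all s, and every (s,a) ∈ S × A, the soft and hard Bellman backups satisfy 0 ≤ (T_α Q)(s,a) − (T Q)(s,a) ≤ γ · log|A| · Σ_{s'∈S} P(s'|s,a) · α(s'). -/
open Finset Real

/-- The soft Bellman operator at temperature function `α`:
`(T_α Q)(s,a) = r(s,a) + γ·∑_{s'} P(s'|s,a)·α(s')·log(∑_{a'} exp(Q(s',a')/α(s')))`. -/
noncomputable def softBellman {S A : Type*} [Fintype S] [Fintype A]
    (r : S → A → ℝ) (γ : ℝ) (P : S → A → S → ℝ) (α : S → ℝ)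
    (Q : S → A → ℝ) (s : S) (a : A) : ℝ :=
  r s a + γ * ∑ s', P s a s' * (α s' * Real.log (∑ a', Real.exp (Q s' a' / α s')))

/-- The Bellman optimality operator:
`(T Q)(s,a) = r(s,a) + γ·∑_{s'} P(s'|s,a)·max_{a'} Q(s',a')`. -/
noncomputable def hardBellman {S A : Type*} [Fintype S] [Fintype A] [Nonempty A]
    (r : S → A → ℝ) (γ : ℝ) (P : S → A → S → ℝ)
    (Q : S → A → ℝ) (s : S) (a : A) : ℝ :=
  r s a + γ * ∑ s', P s a s' * Finset.univ.sup' Finset.univ_nonempty (Q s')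

lemma logsumexp_bounds {A : Type*} [Fintype A] [Nonempty A] (f : A → ℝ) (t : ℝ) (ht : 0 < t) :
    Finset.univ.sup' Finset.univ_nonempty f ≤ t * Real.log (∑ a, Real.exp (f a / t)) ∧
    t * Real.log (∑ a, Real.exp (f a / t)) ≤
      Finset.univ.sup' Finset.univ_nonempty f + t * Real.log (Fintype.card A) := by
  set M := Finset.univ.sup' Finset.univ_nonempty f with hM
  have hpos : (0:ℝ) < ∑ a, Real.exp (f a / t) :=
    Finset.sum_pos (fun a _ => Real.exp_pos _) Finset.univ_nonempty
  obtain ⟨a0, _, ha0⟩ := Finset.exists_mem_eq_sup' Finset.univ_nonempty f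
  constructor
  · have h1 : Real.exp (M / t) ≤ ∑ a, Real.exp (f a / t) := by
      rw [show M = f a0 from ha0]
      exact Finset.single_le_sum (f := fun x => Real.exp (f x / t)) (fun a _ => (Real.exp_pos _).le) (Finset.mem_univ a0)
    have := Real.log_le_log (Real.exp_pos _) h1
    rw [Real.log_exp] at this
    have := mul_le_mul_of_nonneg_left this ht.le
    calc M = t * (M / t) := by field_simp
      _ ≤ t * Real.log (∑ a, Real.exp (f a / t)) := this
  · have h2 : ∑ a, Real.exp (f a / t) ≤ (Fintype.card A : ℝ) * Real.exp (M / t) := by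
      have h := Finset.sum_le_card_nsmul Finset.univ (fun a => Real.exp (f a / t))
        (Real.exp (M / t)) (fun a _ => Real.exp_le_exp.2
          (div_le_div_of_nonneg_right (Finset.le_sup' f (Finset.mem_univ a)) ht.le))
      rw [nsmul_eq_mul, Finset.card_univ] at h
      exact h
    have hlog := Real.log_le_log hpos h2
    rw [Real.log_mul (by positivity) (Real.exp_pos _).ne', Real.log_exp] at hlog
    have := mul_le_mul_of_nonneg_left hlog ht.le
    calc t * Real.log (∑ a, Real.exp (f a / t))
        ≤ t * (Real.log (Fintype.card A) + M / t) := this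
      _ = M + t * Real.log (Fintype.card A) := by field_simp; ring

/-- The soft Bellman backup is a one-sided approximation of the hard backup:
`0 ≤ (T_α Q)(s,a) − (T Q)(s,a) ≤ γ·log|A|·∑_{s'} P(s'|s,a)·α(s')`. -/
theorem soft_hard_bellman_gap {S A : Type*} [Fintype S] [Fintype A] [Nonempty S] [Nonempty A]
    (r : S → A → ℝ) (γ : ℝ) (hγ0 : 0 < γ) (hγ1 : γ < 1)
    (P : S → A → S → ℝ) (hP : ∀ s a s', 0 ≤ P s a s')
    (hP1 : ∀ s a, ∑ s', P s a s' = 1)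
    (α : S → ℝ) (hα : ∀ s, 0 < α s)
    (Q : S → A → ℝ) (s : S) (a : A) :
    0 ≤ softBellman r γ P α Q s a - hardBellman r γ P Q s a ∧
    softBellman r γ P α Q s a - hardBellman r γ P Q s a ≤
      γ * Real.log (Fintype.card A) * ∑ s', P s a s' * α s' := by
  have key : softBellman r γ P α Q s a - hardBellman r γ P Q s a
      = γ * ∑ s', P s a s' *
        (α s' * Real.log (∑ a', Real.exp (Q s' a' / α s'))
          - Finset.univ.sup' Finset.univ_nonempty (Q s')) := by
    simp only [softBellman, hardBellman, mul_sub]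
    rw [Finset.sum_sub_distrib, mul_sub]
    ring
  rw [key]
  constructor
  · apply mul_nonneg hγ0.le
    apply Finset.sum_nonneg
    intro s' _
    apply mul_nonneg (hP s a s')
    have := (logsumexp_bounds (Q s') (α s') (hα s')).1
    linarith
  · rw [mul_assoc]
    apply mul_le_mul_of_nonneg_left _ hγ0.le
    rw [Finset.mul_sum]
    apply Finset.sum_le_sum
    intro s' _
    rw [mul_comm (Real.log _), mul_assoc]
    apply mul_le_mul_of_nonneg_left _ (hP s a s')
    have := (logsumexp_bounds (Q s') (α s') (hα s')).2
    rw [mul_comm (α s')]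
    linarith
end

section
/- For every Q : S × A → ℝ and every temperature function α : S → ℝ with α(s) > 0 for all s, the sup-norm distance between the soft and hard Bellman backups satisfies ‖T_α Q − T Q‖∞ ≤ γ · log|A| · max_{s∈S} α(s), where ‖F‖∞ = max_{(s,a)∈S×A} |F(s,a)|. -/
open Finset Real

/-- Sup norm on `S × A → ℝ`: `‖F‖∞ = max_{(s,a)} |F(s,a)|`. -/
noncomputable def supNorm {S A : Type*} [Fintype S] [Fintype A] [Nonempty S] [Nonempty A]
    (Q : S → A → ℝ) : ℝ :=
  Finset.univ.sup' Finset.univ_nonempty (fun p : S × A => |Q p.1 p.2|)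

lemma lse_lower {A : Type*} [Fintype A] [Nonempty A] (α : ℝ) (hα : 0 < α) (Q : A → ℝ) :
    Finset.univ.sup' Finset.univ_nonempty Q ≤ α * Real.log (∑ a, Real.exp (Q a / α)) := by
  obtain ⟨a₀, _, ha₀⟩ := Finset.exists_mem_eq_sup' Finset.univ_nonempty Q
  have hpos : (0:ℝ) < ∑ a, Real.exp (Q a / α) :=
    Finset.sum_pos (fun a _ => Real.exp_pos _) Finset.univ_nonempty
  have h1 : Real.exp (Q a₀ / α) ≤ ∑ a, Real.exp (Q a / α) :=
    Finset.single_le_sum (f := fun a => Real.exp (Q a / α))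
      (fun a _ => (Real.exp_pos _).le) (Finset.mem_univ a₀)
  have h2 : Q a₀ / α ≤ Real.log (∑ a, Real.exp (Q a / α)) :=
    (Real.le_log_iff_exp_le hpos).2 h1
  rw [ha₀]
  calc Q a₀ = α * (Q a₀ / α) := by field_simp
    _ ≤ α * Real.log (∑ a, Real.exp (Q a / α)) := by
        exact mul_le_mul_of_nonneg_left h2 hα.le

lemma lse_upper {A : Type*} [Fintype A] [Nonempty A] (α : ℝ) (hα : 0 < α) (Q : A → ℝ) :
    α * Real.log (∑ a, Real.exp (Q a / α)) ≤
      Finset.univ.sup' Finset.univ_nonempty Q + α * Real.log (Fintype.card A) := by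
  set M := Finset.univ.sup' Finset.univ_nonempty Q with hM
  have h1 : ∑ a, Real.exp (Q a / α) ≤ (Fintype.card A : ℝ) * Real.exp (M / α) := by
    rw [← Finset.card_univ, ← nsmul_eq_mul, ← Finset.sum_const]
    refine Finset.sum_le_sum fun a _ => Real.exp_le_exp.2 ?_
    exact div_le_div_of_nonneg_right (Finset.le_sup' Q (Finset.mem_univ a)) hα.le
  have hpos : (0:ℝ) < ∑ a, Real.exp (Q a / α) :=
    Finset.sum_pos (fun a _ => Real.exp_pos _) Finset.univ_nonempty
  have hcard : (0:ℝ) < (Fintype.card A : ℝ) := by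
    exact_mod_cast Fintype.card_pos
  have h2 : Real.log (∑ a, Real.exp (Q a / α)) ≤
      Real.log (Fintype.card A) + M / α := by
    calc Real.log (∑ a, Real.exp (Q a / α))
        ≤ Real.log ((Fintype.card A : ℝ) * Real.exp (M / α)) := Real.log_le_log hpos h1
      _ = Real.log (Fintype.card A) + M / α := by
          rw [Real.log_mul hcard.ne' (Real.exp_pos _).ne', Real.log_exp]
  calc α * Real.log (∑ a, Real.exp (Q a / α))
      ≤ α * (Real.log (Fintype.card A) + M / α) := mul_le_mul_of_nonneg_left h2 hα.le
    _ = M + α * Real.log (Fintype.card A) := by field_simp; ring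

/-- Sup-norm distance between the soft and hard Bellman backups:
`‖T_α Q − T Q‖∞ ≤ γ·log|A|·max_s α(s)`. -/
theorem soft_hard_bellman_supnorm {S A : Type*} [Fintype S] [Fintype A] [Nonempty S] [Nonempty A]
    (r : S → A → ℝ) (γ : ℝ) (hγ0 : 0 < γ) (hγ1 : γ < 1)
    (P : S → A → S → ℝ) (hP : ∀ s a s', 0 ≤ P s a s')
    (hP1 : ∀ s a, ∑ s', P s a s' = 1)
    (α : S → ℝ) (hα : ∀ s, 0 < α s)
    (Q : S → A → ℝ) :
    supNorm (fun s a => softBellman r γ P α Q s a - hardBellman r γ P Q s a) ≤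
      γ * Real.log (Fintype.card A) * Finset.univ.sup' Finset.univ_nonempty α := by
  set αmax := Finset.univ.sup' Finset.univ_nonempty α with hαmax
  have hαmax0 : 0 < αmax := lt_of_lt_of_le (hα Classical.ofNonempty)
    (Finset.le_sup' α (Finset.mem_univ _))
  have hlog0 : 0 ≤ Real.log (Fintype.card A) := by
    apply Real.log_nonneg; exact_mod_cast Fintype.card_pos
  apply Finset.sup'_le
  rintro ⟨s, a⟩ -
  set X : S → ℝ := fun s' => α s' * Real.log (∑ a', Real.exp (Q s' a' / α s')) with hX
  set M : S → ℝ := fun s' => Finset.univ.sup' Finset.univ_nonempty (Q s') with hMdef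
  have hdiff : softBellman r γ P α Q s a - hardBellman r γ P Q s a
      = γ * ∑ s', P s a s' * (X s' - M s') := by
    simp only [softBellman, hardBellman, hX, hMdef, mul_sub]
    rw [Finset.sum_sub_distrib]
    ring
  have hterm_nonneg : ∀ s', 0 ≤ P s a s' * (X s' - M s') := fun s' =>
    mul_nonneg (hP s a s') (sub_nonneg.2 (lse_lower (α s') (hα s') (Q s')))
  have hterm_le : ∀ s', P s a s' * (X s' - M s') ≤ P s a s' * (Real.log (Fintype.card A) * αmax) := by
    intro s'
    apply mul_le_mul_of_nonneg_left _ (hP s a s')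
    have h1 : X s' - M s' ≤ α s' * Real.log (Fintype.card A) := by
      have := lse_upper (α s') (hα s') (Q s')
      simp only [hX, hMdef]; linarith
    calc X s' - M s' ≤ α s' * Real.log (Fintype.card A) := h1
      _ ≤ αmax * Real.log (Fintype.card A) :=
          mul_le_mul_of_nonneg_right (Finset.le_sup' α (Finset.mem_univ s')) hlog0
      _ = Real.log (Fintype.card A) * αmax := mul_comm _ _
  have hsum : ∑ s', P s a s' * (X s' - M s') ≤ Real.log (Fintype.card A) * αmax := by
    calc ∑ s', P s a s' * (X s' - M s')
        ≤ ∑ s', P s a s' * (Real.log (Fintype.card A) * αmax) :=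
          Finset.sum_le_sum fun s' _ => hterm_le s'
      _ = (∑ s', P s a s') * (Real.log (Fintype.card A) * αmax) := by
          rw [Finset.sum_mul]
      _ = Real.log (Fintype.card A) * αmax := by rw [hP1 s a, one_mul]
  simp only
  rw [hdiff, abs_of_nonneg (mul_nonneg hγ0.le (Finset.sum_nonneg fun s' _ => hterm_nonneg s'))]
  calc γ * ∑ s', P s a s' * (X s' - M s')
      ≤ γ * (Real.log (Fintype.card A) * αmax) := mul_le_mul_of_nonneg_left hsum hγ0.le
    _ = γ * Real.log (Fintype.card A) * αmax := by ring
end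

section
/- Fix κ > 0 and α_min > 0. Let Q_{t+1}^{(i)} = T_{α_t} Q_t^{(i)} for i ∈ {1,2} be coupled iterates driven by the shared disagreement-scaled temperature α_t(s) = max{α_min, (max_{a∈A} |Q_t^{(1)}(s,a) − Q_t^{(2)}(s,a)|)/κ}, and let Δ_0 = ‖Q_0^{(1)} − Q_0^{(2)}‖∞. Then for all t ≥ 0, max_{s∈S} α_t(s) ≤ α_min + γ^t · Δ_0 / κ. -/
open Finset Real

lemma lse_le {A : Type*} [Fintype A] [Nonempty A] (f g : A → ℝ) (c : ℝ)
    (h : ∀ a, f a - g a ≤ c) :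
    Real.log (∑ a, Real.exp (f a)) ≤ c + Real.log (∑ a, Real.exp (g a)) := by
  have hpos : 0 < ∑ a, Real.exp (g a) :=
    Finset.sum_pos (fun a _ => Real.exp_pos _) Finset.univ_nonempty
  have h1 : ∑ a, Real.exp (f a) ≤ Real.exp c * ∑ a, Real.exp (g a) := by
    rw [Finset.mul_sum]
    refine Finset.sum_le_sum fun a _ => ?_
    rw [← Real.exp_add]
    exact Real.exp_le_exp.2 (by linarith [h a])
  calc Real.log (∑ a, Real.exp (f a)) ≤ Real.log (Real.exp c * ∑ a, Real.exp (g a)) :=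
        Real.log_le_log (Finset.sum_pos (fun a _ => Real.exp_pos _) Finset.univ_nonempty) h1
    _ = c + Real.log (∑ a, Real.exp (g a)) := by
        rw [Real.log_mul (Real.exp_ne_zero _) (ne_of_gt hpos), Real.log_exp]

lemma lse_abs {A : Type*} [Fintype A] [Nonempty A] (f g : A → ℝ) (c : ℝ)
    (h : ∀ a, |f a - g a| ≤ c) :
    |Real.log (∑ a, Real.exp (f a)) - Real.log (∑ a, Real.exp (g a))| ≤ c := by
  rw [abs_sub_le_iff]
  constructor
  · linarith [lse_le f g c (fun a => (abs_le.1 (h a)).2)]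
  · have := lse_le g f c (fun a => by have := (abs_le.1 (h a)).1; linarith)
    linarith

/-- Under coupled soft value iteration with the disagreement-scaled temperature
`α_t(s) = max{α_min, (max_a |Q_t¹(s,a) − Q_t²(s,a)|)/κ}`, the temperatures satisfy
`max_s α_t(s) ≤ α_min + γ^t·Δ_0/κ` where `Δ_0 = ‖Q_0¹ − Q_0²‖∞`. -/
theorem disagreement_temperature_bound {S A : Type*}
    [Fintype S] [Fintype A] [Nonempty S] [Nonempty A]
    (r : S → A → ℝ) (γ : ℝ) (hγ0 : 0 < γ) (hγ1 : γ < 1)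
    (P : S → A → S → ℝ) (hP : ∀ s a s', 0 ≤ P s a s')
    (hP1 : ∀ s a, ∑ s', P s a s' = 1)
    (κ αmin : ℝ) (hκ : 0 < κ) (hαmin : 0 < αmin)
    (Q1 Q2 : ℕ → S → A → ℝ)
    (αseq : ℕ → S → ℝ)
    (hαseq : ∀ t s, αseq t s =
      max αmin ((Finset.univ.sup' Finset.univ_nonempty fun a => |Q1 t s a - Q2 t s a|) / κ))
    (hQ1 : ∀ t, Q1 (t + 1) = softBellman r γ P (αseq t) (Q1 t))
    (hQ2 : ∀ t, Q2 (t + 1) = softBellman r γ P (αseq t) (Q2 t)) :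
    ∀ t, Finset.univ.sup' Finset.univ_nonempty (αseq t) ≤
      αmin + γ ^ t * supNorm (fun s a => Q1 0 s a - Q2 0 s a) / κ := by
  set D : ℕ → ℝ := fun t => supNorm (fun s a => Q1 t s a - Q2 t s a) with hD
  have hDmem : ∀ t s a, |Q1 t s a - Q2 t s a| ≤ D t := by
    intro t s a
    exact Finset.le_sup' (fun p : S × A => |Q1 t p.1 p.2 - Q2 t p.1 p.2|) (Finset.mem_univ (s, a))
  have hD0 : ∀ t, 0 ≤ D t := fun t =>
    le_trans (abs_nonneg _) (hDmem t (Classical.arbitrary S) (Classical.arbitrary A))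
  have hαpos : ∀ t s, 0 < αseq t s := by
    intro t s; rw [hαseq]; exact lt_of_lt_of_le hαmin (le_max_left _ _)
  have hstep : ∀ t, D (t + 1) ≤ γ * D t := by
    intro t
    apply Finset.sup'_le
    rintro ⟨s, a⟩ -
    show |Q1 (t + 1) s a - Q2 (t + 1) s a| ≤ γ * D t
    rw [hQ1, hQ2]
    unfold softBellman
    have key : ∀ s', |αseq t s' * Real.log (∑ a', Real.exp (Q1 t s' a' / αseq t s'))
        - αseq t s' * Real.log (∑ a', Real.exp (Q2 t s' a' / αseq t s'))| ≤ D t := by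
      intro s'
      rw [← mul_sub, abs_mul, abs_of_pos (hαpos t s')]
      have hα := hαpos t s'
      have h1 : ∀ a', |Q1 t s' a' / αseq t s' - Q2 t s' a' / αseq t s'| ≤ D t / αseq t s' := by
        intro a'
        rw [div_sub_div_same, abs_div, abs_of_pos hα]
        exact div_le_div_of_nonneg_right (hDmem t s' a') hα.le
      have h2 := lse_abs (fun a' => Q1 t s' a' / αseq t s')
        (fun a' => Q2 t s' a' / αseq t s') (D t / αseq t s') h1
      calc αseq t s' * |_| ≤ αseq t s' * (D t / αseq t s') :=
            mul_le_mul_of_nonneg_left h2 hα.le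
        _ = D t := by field_simp
    have heq : (r s a + γ * ∑ s', P s a s' *
          (αseq t s' * Real.log (∑ a', Real.exp (Q1 t s' a' / αseq t s'))))
        - (r s a + γ * ∑ s', P s a s' *
          (αseq t s' * Real.log (∑ a', Real.exp (Q2 t s' a' / αseq t s'))))
        = γ * ∑ s', P s a s' *
          (αseq t s' * Real.log (∑ a', Real.exp (Q1 t s' a' / αseq t s'))
           - αseq t s' * Real.log (∑ a', Real.exp (Q2 t s' a' / αseq t s'))) := by
      simp only [mul_sub]
      rw [Finset.sum_sub_distrib]
      ring
    rw [heq, abs_mul, abs_of_pos hγ0]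
    have hbound : |∑ s', P s a s' *
          (αseq t s' * Real.log (∑ a', Real.exp (Q1 t s' a' / αseq t s'))
           - αseq t s' * Real.log (∑ a', Real.exp (Q2 t s' a' / αseq t s')))| ≤ D t := by
      calc |∑ s', P s a s' * _| ≤ ∑ s', |P s a s' * _| := Finset.abs_sum_le_sum_abs _ _
        _ ≤ ∑ s', P s a s' * D t := by
            refine Finset.sum_le_sum fun s' _ => ?_
            rw [abs_mul, abs_of_nonneg (hP s a s')]
            exact mul_le_mul_of_nonneg_left (key s') (hP s a s')
        _ = D t := by rw [← Finset.sum_mul, hP1, one_mul]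
    exact mul_le_mul_of_nonneg_left hbound hγ0.le
  have hgeo : ∀ t, D t ≤ γ ^ t * D 0 := by
    intro t
    induction t with
    | zero => simp
    | succ n ih =>
      calc D (n + 1) ≤ γ * D n := hstep n
        _ ≤ γ * (γ ^ n * D 0) := mul_le_mul_of_nonneg_left ih hγ0.le
        _ = γ ^ (n + 1) * D 0 := by ring
  intro t
  apply Finset.sup'_le
  intro s _
  rw [hαseq]
  have h1 : (Finset.univ.sup' Finset.univ_nonempty fun a => |Q1 t s a - Q2 t s a|) ≤ D t :=
    Finset.sup'_le _ _ fun a _ => hDmem t s a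
  have h2 : 0 ≤ γ ^ t * D 0 / κ := div_nonneg (mul_nonneg (pow_nonneg hγ0.le t) (hD0 0)) hκ.le
  apply max_le
  · linarith
  · have : (Finset.univ.sup' Finset.univ_nonempty fun a => |Q1 t s a - Q2 t s a|) / κ
        ≤ γ ^ t * D 0 / κ := by
      exact div_le_div_of_nonneg_right (h1.trans (hgeo t)) hκ.le
    linarith
end

section
/- Fix κ > 0 and α_min > 0, and let Q* : S × A → ℝ be a fixed point of the Bellman optimality operator, T Q* = Q*. Let Q_{t+1}^{(i)} = T_{α_t} Q_t^{(i)} for i ∈ {1,2} be coupled iterates driven by the shared disagreement-scaled temperature α_t(s) = max{α_min, (max_{a∈A} |Q_t^{(1)}(s,a) − Q_t^{(2)}(s,a)|)/κ}, let Δ_0 = ‖Q_0^{(1)} − Q_0^{(2)}‖∞, and let e_t^{(i)} = ‖Q_t^{(i)} − Q*‖∞. Then for each i ∈ {1,2} and all t ≥ 0, e_{t+1}^{(i)} ≤ γ · e_t^{(i)} + γ · log|A| · (α_min + γ^t · Δ_0 / κ). -/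
/-!
The temperature-`α` log-sum-exp `softMax α q = α log ∑ₐ exp (q a / α)`, like the maximum, is
monotone and commutes with adding constants, hence is 1-Lipschitz for the sup norm; moreover it
exceeds the maximum by at most `α log |A|`. So the soft Bellman operator is a `γ`-contraction for
any fixed temperature, and it is within `γ (‖Q - Q*‖ + log |A| · sup α)` of `T Q* = Q*`. Since both
iterates use the same temperature `α_t`, their disagreement contracts: `‖Q¹_t - Q²_t‖ ≤ γᵗ Δ₀`,
whence `α_t ≤ α_min + γᵗ Δ₀ / κ`.
-/

open Finset Real

section Pi

variable {ι : Type*} [Fintype ι]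

lemma sup'_abs_eq_norm [Nonempty ι] (q : ι → ℝ) :
    univ.sup' univ_nonempty (fun i => |q i|) = ‖q‖ := by
  obtain ⟨i₀⟩ := ‹Nonempty ι›
  have hle : ∀ i, |q i| ≤ univ.sup' univ_nonempty (fun i => |q i|) := fun i =>
    le_sup' (fun i => |q i|) (mem_univ i)
  exact le_antisymm (sup'_le _ _ fun i _ => norm_le_pi_norm q i)
    ((pi_norm_le_iff_of_nonneg ((abs_nonneg _).trans (hle i₀))).2 hle)

lemma abs_sub_le_norm_sub_of_monotone_of_map_add_const {f : (ι → ℝ) → ℝ} (hmono : Monotone f)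
    (hadd : ∀ q c, f (fun i => q i + c) = f q + c) (q q' : ι → ℝ) : |f q - f q'| ≤ ‖q - q'‖ := by
  have key : ∀ q q' : ι → ℝ, f q ≤ f q' + ‖q - q'‖ := fun q q' =>
    calc f q ≤ f (fun i => q' i + ‖q - q'‖) := hmono fun i => by
            have := (le_abs_self _).trans (norm_le_pi_norm (q - q') i)
            simp only [Pi.sub_apply] at this
            linarith
      _ = f q' + ‖q - q'‖ := hadd q' _
  rw [abs_sub_le_iff]
  constructor
  · linarith [key q q']
  · linarith [key q' q, norm_sub_rev q q']

lemma abs_sup'_sub_sup'_le [Nonempty ι] (q q' : ι → ℝ) :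
    |univ.sup' univ_nonempty q - univ.sup' univ_nonempty q'| ≤ ‖q - q'‖ :=
  abs_sub_le_norm_sub_of_monotone_of_map_add_const (fun _ _ h => sup'_mono_fun fun i _ => h i)
    (fun q c => (sup'_add _ q c _).symm) q q'

end Pi

section SoftMax

variable {A : Type*} [Fintype A] {α : ℝ}

noncomputable def softMax (α : ℝ) (q : A → ℝ) : ℝ :=
  α * log (∑ a, exp (q a / α))

lemma le_softMax (hα : 0 < α) (q : A → ℝ) (a : A) : q a ≤ softMax α q := by
  have h : q a / α ≤ log (∑ a, exp (q a / α)) := by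
    rw [← log_exp (q a / α)]
    exact log_le_log (exp_pos _)
      (single_le_sum (f := fun a => exp (q a / α)) (fun a _ => (exp_pos _).le) (mem_univ a))
  exact (div_le_iff₀' hα).1 h

variable [Nonempty A]

lemma sum_exp_div_pos (α : ℝ) (q : A → ℝ) : 0 < ∑ a, exp (q a / α) :=
  sum_pos (fun _ _ => exp_pos _) univ_nonempty

lemma softMax_add_const (hα : α ≠ 0) (q : A → ℝ) (c : ℝ) :
    softMax α (fun a => q a + c) = softMax α q + c := by
  have hsum : ∑ a, exp ((q a + c) / α) = exp (c / α) * ∑ a, exp (q a / α) := by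
    rw [mul_sum]
    refine sum_congr rfl fun a _ => ?_
    rw [← exp_add, add_div, add_comm]
  rw [softMax, softMax, hsum, log_mul (exp_ne_zero _) (sum_exp_div_pos α q).ne', log_exp, mul_add,
    mul_div_cancel₀ _ hα, add_comm]

lemma softMax_const (hα : α ≠ 0) (c : ℝ) :
    softMax α (fun _ : A => c) = c + α * log (Fintype.card A) := by
  have h := softMax_add_const hα (fun _ : A => 0) c
  simp only [zero_add] at h
  rw [h, softMax]
  simp only [zero_div, exp_zero, sum_const, card_univ, nsmul_eq_mul, mul_one]
  ring

lemma softMax_mono (hα : 0 ≤ α) : Monotone (softMax (A := A) α) := fun q _ h =>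
  mul_le_mul_of_nonneg_left (log_le_log (sum_exp_div_pos α q)
    (sum_le_sum fun a _ => exp_le_exp.2 (div_le_div_of_nonneg_right (h a) hα))) hα

lemma abs_softMax_sub_sup'_le (hα : 0 < α) (q : A → ℝ) :
    |softMax α q - univ.sup' univ_nonempty q| ≤ α * log (Fintype.card A) := by
  have hlow : univ.sup' univ_nonempty q ≤ softMax α q := sup'_le _ _ fun a _ => le_softMax hα q a
  have hle : q ≤ fun _ => univ.sup' univ_nonempty q := fun a => le_sup' q (mem_univ a)
  have hup : softMax α q ≤ univ.sup' univ_nonempty q + α * log (Fintype.card A) :=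
    (softMax_mono hα.le hle).trans_eq (softMax_const hα.ne' _)
  rw [abs_of_nonneg (sub_nonneg.2 hlow)]
  linarith

lemma abs_softMax_sub_softMax_le (hα : 0 < α) (q q' : A → ℝ) :
    |softMax α q - softMax α q'| ≤ ‖q - q'‖ :=
  abs_sub_le_norm_sub_of_monotone_of_map_add_const (softMax_mono hα.le) (softMax_add_const hα.ne')
    q q'

end SoftMax

section Bellman

variable {S A : Type*} [Fintype S] [Fintype A]

lemma abs_sum_mul_le_of_stochastic {p : S → ℝ} (hp : ∀ s, 0 ≤ p s) (hp1 : ∑ s, p s = 1)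
    {f : S → ℝ} {c : ℝ} (hf : ∀ s, |f s| ≤ c) : |∑ s, p s * f s| ≤ c :=
  calc |∑ s, p s * f s| ≤ ∑ s, p s * |f s| := by
        refine (abs_sum_le_sum_abs _ _).trans_eq (sum_congr rfl fun s _ => ?_)
        rw [abs_mul, abs_of_nonneg (hp s)]
    _ ≤ ∑ s, p s * c := sum_le_sum fun s _ => mul_le_mul_of_nonneg_left (hf s) (hp s)
    _ = c := by rw [← sum_mul, hp1, one_mul]

lemma abs_backup_sub_backup_le {γ : ℝ} (hγ : 0 ≤ γ) {p : S → ℝ} (hp : ∀ s, 0 ≤ p s)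
    (hp1 : ∑ s, p s = 1) {f g : S → ℝ} {c : ℝ} (hfg : ∀ s, |f s - g s| ≤ c) (x : ℝ) :
    |(x + γ * ∑ s, p s * f s) - (x + γ * ∑ s, p s * g s)| ≤ γ * c := by
  rw [add_sub_add_left_eq_sub, ← mul_sub, ← sum_sub_distrib, abs_mul, abs_of_nonneg hγ]
  simp only [← mul_sub]
  exact mul_le_mul_of_nonneg_left (abs_sum_mul_le_of_stochastic hp hp1 hfg) hγ

lemma abs_le_norm (Q : S → A → ℝ) (s : S) (a : A) : |Q s a| ≤ ‖Q‖ :=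
  (norm_le_pi_norm (Q s) a).trans (norm_le_pi_norm Q s)

variable [Nonempty S] [Nonempty A]

lemma norm_le_of_forall_abs_le {Q : S → A → ℝ} {c : ℝ} (h : ∀ s a, |Q s a| ≤ c) : ‖Q‖ ≤ c := by
  obtain ⟨s₀⟩ := ‹Nonempty S›
  obtain ⟨a₀⟩ := ‹Nonempty A›
  have hc : 0 ≤ c := (abs_nonneg _).trans (h s₀ a₀)
  exact (pi_norm_le_iff_of_nonneg hc).2 fun s => (pi_norm_le_iff_of_nonneg hc).2 fun a => h s a

lemma supNorm_eq_norm (Q : S → A → ℝ) : supNorm Q = ‖Q‖ :=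
  le_antisymm (sup'_le _ _ fun p _ => abs_le_norm Q p.1 p.2)
    (norm_le_of_forall_abs_le fun s a => le_sup' (fun p : S × A => |Q p.1 p.2|) (mem_univ (s, a)))

lemma supNorm_sub_eq_norm_sub (Q Q' : S → A → ℝ) :
    supNorm (fun s a => Q s a - Q' s a) = ‖Q - Q'‖ :=
  supNorm_eq_norm (Q - Q')

variable (r : S → A → ℝ) {γ : ℝ} {P : S → A → S → ℝ} {α : S → ℝ}

lemma norm_softBellman_sub_softBellman_le (hγ : 0 ≤ γ) (hP : ∀ s a s', 0 ≤ P s a s')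
    (hP1 : ∀ s a, ∑ s', P s a s' = 1) (hα : ∀ s, 0 < α s) (Q Q' : S → A → ℝ) :
    ‖softBellman r γ P α Q - softBellman r γ P α Q'‖ ≤ γ * ‖Q - Q'‖ :=
  norm_le_of_forall_abs_le fun s a => abs_backup_sub_backup_le hγ (hP s a) (hP1 s a)
    (fun s' => (abs_softMax_sub_softMax_le (hα s') _ _).trans (norm_le_pi_norm (Q - Q') s')) _

lemma norm_softBellman_sub_hardBellman_le (hγ : 0 ≤ γ) (hP : ∀ s a s', 0 ≤ P s a s')
    (hP1 : ∀ s a, ∑ s', P s a s' = 1) (hα : ∀ s, 0 < α s) {B : ℝ} (hB : ∀ s, α s ≤ B)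
    (Q Q' : S → A → ℝ) :
    ‖softBellman r γ P α Q - hardBellman r γ P Q'‖ ≤ γ * (‖Q - Q'‖ + log (Fintype.card A) * B) := by
  have hlog : 0 ≤ log (Fintype.card A) := log_nonneg (by exact_mod_cast Fintype.card_pos)
  refine norm_le_of_forall_abs_le fun s a => abs_backup_sub_backup_le hγ (hP s a) (hP1 s a)
    (fun s' => ?_) _
  calc |softMax (α s') (Q s') - univ.sup' univ_nonempty (Q' s')|
      ≤ |softMax (α s') (Q s') - univ.sup' univ_nonempty (Q s')|
        + |univ.sup' univ_nonempty (Q s') - univ.sup' univ_nonempty (Q' s')| := abs_sub_le _ _ _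
    _ ≤ α s' * log (Fintype.card A) + ‖Q - Q'‖ :=
        add_le_add (abs_softMax_sub_sup'_le (hα s') _)
          ((abs_sup'_sub_sup'_le _ _).trans (norm_le_pi_norm (Q - Q') s'))
    _ ≤ ‖Q - Q'‖ + log (Fintype.card A) * B := by
        linarith [mul_le_mul_of_nonneg_right (hB s') hlog]

end Bellman

theorem error_recursion_general {S A : Type*}
    [Fintype S] [Fintype A] [Nonempty S] [Nonempty A]
    (r : S → A → ℝ) (γ : ℝ) (hγ0 : 0 < γ)
    (P : S → A → S → ℝ) (hP : ∀ s a s', 0 ≤ P s a s')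
    (hP1 : ∀ s a, ∑ s', P s a s' = 1)
    (κ αmin : ℝ) (hκ : 0 < κ) (hαmin : 0 < αmin)
    (Qstar : S → A → ℝ) (hQstar : hardBellman r γ P Qstar = Qstar)
    (Q1 Q2 : ℕ → S → A → ℝ)
    (αseq : ℕ → S → ℝ)
    (hαseq : ∀ t s, αseq t s =
      max αmin ((Finset.univ.sup' Finset.univ_nonempty fun a => |Q1 t s a - Q2 t s a|) / κ))
    (hQ1 : ∀ t, Q1 (t + 1) = softBellman r γ P (αseq t) (Q1 t))
    (hQ2 : ∀ t, Q2 (t + 1) = softBellman r γ P (αseq t) (Q2 t)) :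
    ∀ (Qi : ℕ → S → A → ℝ), (Qi = Q1 ∨ Qi = Q2) → ∀ t,
      supNorm (fun s a => Qi (t + 1) s a - Qstar s a) ≤
        γ * supNorm (fun s a => Qi t s a - Qstar s a) +
          γ * Real.log (Fintype.card A) *
            (αmin + γ ^ t * supNorm (fun s a => Q1 0 s a - Q2 0 s a) / κ) := by
  have hα_pos : ∀ t s, 0 < αseq t s := fun t s =>
    (hαseq t s).symm ▸ hαmin.trans_le (le_max_left _ _)
  have hdisagree : ∀ t, ‖Q1 t - Q2 t‖ ≤ γ ^ t * ‖Q1 0 - Q2 0‖ := by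
    intro t
    induction t with
    | zero => simp
    | succ t ih =>
      calc ‖Q1 (t + 1) - Q2 (t + 1)‖ ≤ γ * ‖Q1 t - Q2 t‖ := by
            rw [hQ1, hQ2]
            exact norm_softBellman_sub_softBellman_le r hγ0.le hP hP1 (hα_pos t) _ _
        _ ≤ γ * (γ ^ t * ‖Q1 0 - Q2 0‖) := by gcongr
        _ = γ ^ (t + 1) * ‖Q1 0 - Q2 0‖ := by ring
  have hα_le : ∀ t s, αseq t s ≤ αmin + γ ^ t * ‖Q1 0 - Q2 0‖ / κ := by
    intro t s
    rw [hαseq, sup'_abs_eq_norm]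
    refine max_le (le_add_of_nonneg_right (by positivity)) (le_add_of_nonneg_of_le hαmin.le ?_)
    gcongr
    exact (norm_le_pi_norm (Q1 t - Q2 t) s).trans (hdisagree t)
  rintro Qi hQi t
  have hstep : Qi (t + 1) = softBellman r γ P (αseq t) (Qi t) := by
    rcases hQi with rfl | rfl
    exacts [hQ1 t, hQ2 t]
  simp only [supNorm_sub_eq_norm_sub, hstep]
  calc ‖softBellman r γ P (αseq t) (Qi t) - Qstar‖
      = ‖softBellman r γ P (αseq t) (Qi t) - hardBellman r γ P Qstar‖ := by rw [hQstar]
    _ ≤ _ := norm_softBellman_sub_hardBellman_le r hγ0.le hP hP1 (hα_pos t) (hα_le t) _ _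
    _ = _ := by ring

/-- One-step error recursion for coupled soft value iteration with
disagreement-scaled temperature: with `e_t⁽ⁱ⁾ = ‖Q_t⁽ⁱ⁾ − Q*‖∞` and
`Δ_0 = ‖Q_0¹ − Q_0²‖∞`, one has
`e_{t+1}⁽ⁱ⁾ ≤ γ·e_t⁽ⁱ⁾ + γ·log|A|·(α_min + γ^t·Δ_0/κ)`. -/
theorem error_recursion {S A : Type*}
    [Fintype S] [Fintype A] [Nonempty S] [Nonempty A]
    (r : S → A → ℝ) (γ : ℝ) (hγ0 : 0 < γ) (hγ1 : γ < 1)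
    (P : S → A → S → ℝ) (hP : ∀ s a s', 0 ≤ P s a s')
    (hP1 : ∀ s a, ∑ s', P s a s' = 1)
    (κ αmin : ℝ) (hκ : 0 < κ) (hαmin : 0 < αmin)
    (Qstar : S → A → ℝ) (hQstar : hardBellman r γ P Qstar = Qstar)
    (Q1 Q2 : ℕ → S → A → ℝ)
    (αseq : ℕ → S → ℝ)
    (hαseq : ∀ t s, αseq t s =
      max αmin ((Finset.univ.sup' Finset.univ_nonempty fun a => |Q1 t s a - Q2 t s a|) / κ))
    (hQ1 : ∀ t, Q1 (t + 1) = softBellman r γ P (αseq t) (Q1 t))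
    (hQ2 : ∀ t, Q2 (t + 1) = softBellman r γ P (αseq t) (Q2 t)) :
    ∀ (Qi : ℕ → S → A → ℝ), (Qi = Q1 ∨ Qi = Q2) → ∀ t,
      supNorm (fun s a => Qi (t + 1) s a - Qstar s a) ≤
        γ * supNorm (fun s a => Qi t s a - Qstar s a) +
          γ * Real.log (Fintype.card A) *
            (αmin + γ ^ t * supNorm (fun s a => Q1 0 s a - Q2 0 s a) / κ) :=
  error_recursion_general r γ hγ0 P hP hP1 κ αmin hκ hαmin Qstar hQstar Q1 Q2 αseq hαseq hQ1 hQ2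
end
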